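/- arXiv:1905.06448 — 3 statements merged into one kernel-verified Lean document; each statement's English description precedes it below -/
import Mathlib

section
/- For any real normed space X, any x, y ∈ X with ‖x‖ > 0, any norming functional F_x of x, and any λ ∈ ℝ: ‖x − λ y‖ ≤ ‖x‖ − λ F_x(y) + 2‖x‖ ρ(|λ|·‖y‖/‖x‖), where ρ is the modulus of smoothness of X. -/
/-! Normalising `x` to a unit vector `a` and writing `λ y = ‖λ y‖ • b` with `‖b‖ = 1`, the definition
of `ρ` bounds `‖x + λ y‖ + ‖x - λ y‖` by `2‖x‖(1 + ρ(|λ|‖y‖/‖x‖))`. The norming functional gives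
`‖x + λ y‖ ≥ F_x(x + λ y) = ‖x‖ + λ F_x(y)`, and subtracting yields the claim. -/

/-- The modulus of smoothness of a real normed space:
`ρ(u) = sup_{‖x‖=‖y‖=1} (‖x+uy‖+‖x−uy‖)/2 − 1`. -/
noncomputable def modulusOfSmoothness (X : Type*) [NormedAddCommGroup X]
    [NormedSpace ℝ X] (u : ℝ) : ℝ :=
  sSup {r : ℝ | ∃ x y : X, ‖x‖ = 1 ∧ ‖y‖ = 1 ∧
    r = (‖x + u • y‖ + ‖x - u • y‖) / 2 - 1}

section

variable {X : Type*} [NormedAddCommGroup X] [NormedSpace ℝ X]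

lemma le_modulusOfSmoothness (u : ℝ) {a b : X} (ha : ‖a‖ = 1) (hb : ‖b‖ = 1) :
    (‖a + u • b‖ + ‖a - u • b‖) / 2 - 1 ≤ modulusOfSmoothness X u := by
  refine le_csSup ⟨|u|, ?_⟩ ⟨a, b, ha, hb, rfl⟩
  rintro r ⟨p, q, hp, hq, rfl⟩
  have h_add := norm_add_le p (u • q)
  have h_sub := norm_sub_le p (u • q)
  rw [norm_smul, Real.norm_eq_abs, hp, hq] at h_add h_sub
  linarith

lemma exists_norm_eq_one_smul_eq [Nontrivial X] (z : X) : ∃ b : X, ‖b‖ = 1 ∧ ‖z‖ • b = z := by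
  rcases eq_or_ne z 0 with rfl | hz
  · obtain ⟨b, hb⟩ := exists_norm_eq X zero_le_one
    exact ⟨b, hb, by rw [norm_zero, zero_smul]⟩
  · exact ⟨‖z‖⁻¹ • z, norm_smul_inv_norm hz, by rw [smul_inv_smul₀ (norm_ne_zero_iff.2 hz)]⟩

lemma norm_add_add_norm_sub_le_modulusOfSmoothness {x : X} (hx : x ≠ 0) (z : X) :
    ‖x + z‖ + ‖x - z‖ ≤ 2 * ‖x‖ * (1 + modulusOfSmoothness X (‖z‖ / ‖x‖)) := by
  have : Nontrivial X := nontrivial_of_ne x 0 hx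
  have hx_pos : 0 < ‖x‖ := norm_pos_iff.2 hx
  obtain ⟨b, hb, hzb⟩ := exists_norm_eq_one_smul_eq z
  have h_scaled : (‖z‖ / ‖x‖) • b = ‖x‖⁻¹ • z := by
    rw [div_eq_inv_mul, mul_smul, hzb]
  have h_plus : ‖‖x‖⁻¹ • x + (‖z‖ / ‖x‖) • b‖ = ‖x + z‖ / ‖x‖ := by
    rw [h_scaled, ← smul_add, norm_smul, norm_inv, norm_norm, inv_mul_eq_div]
  have h_minus : ‖‖x‖⁻¹ • x - (‖z‖ / ‖x‖) • b‖ = ‖x - z‖ / ‖x‖ := by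
    rw [h_scaled, ← smul_sub, norm_smul, norm_inv, norm_norm, inv_mul_eq_div]
  have ha : ‖‖x‖⁻¹ • x‖ = 1 := by
    rw [norm_smul, norm_inv, norm_norm, inv_mul_cancel₀ hx_pos.ne']
  have key := le_modulusOfSmoothness (‖z‖ / ‖x‖) ha hb
  rw [h_plus, h_minus, ← add_div, div_div, sub_le_iff_le_add,
    div_le_iff₀ (by positivity)] at key
  linarith

end

theorem smoothness_inequality
    {X : Type*} [NormedAddCommGroup X] [NormedSpace ℝ X]
    (x y : X) (hx : 0 < ‖x‖)
    (F : X →L[ℝ] ℝ) (hF : ‖F‖ = 1) (hFx : F x = ‖x‖)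
    (l : ℝ) :
    ‖x - l • y‖ ≤ ‖x‖ - l * F y
      + 2 * ‖x‖ * modulusOfSmoothness X (|l| * ‖y‖ / ‖x‖) := by
  have h_sum := norm_add_add_norm_sub_le_modulusOfSmoothness (norm_pos_iff.1 hx) (l • y)
  rw [norm_smul, Real.norm_eq_abs] at h_sum
  have h_norming : ‖x‖ + l * F y ≤ ‖x + l • y‖ := by
    calc ‖x‖ + l * F y = F (x + l • y) := by rw [map_add, map_smul, hFx, smul_eq_mul]
      _ ≤ ‖F‖ * ‖x + l • y‖ := (le_abs_self _).trans (F.le_opNorm _)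
      _ = ‖x + l • y‖ := by rw [hF, one_mul]
  linarith
end

section
/- Let X be a real normed space whose modulus of smoothness satisfies ρ(u) ≤ c u^q for some c > 0 and 1 < q ≤ 2. Let g be a unit vector, F_g a norming functional, and r(f) = f − F_g(f) g. Then for every unit vector f, ‖r(f)‖ ≤ 1 + μ, where μ ∈ (0, 1] satisfies 1 + μ = 2μ ρ(1/μ), and in particular ‖r(f)‖ ≤ min{1 + μ_q, 2} where μ_q > 0 solves 1 + μ_q = 2c μ_q^{1−q}. -/
section ModulusOfSmoothness

variable {X : Type*} [NormedAddCommGroup X] [NormedSpace ℝ X]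

lemma bddAbove_modulusOfSmoothness_set (u : ℝ) :
    BddAbove {r : ℝ | ∃ x y : X, ‖x‖ = 1 ∧ ‖y‖ = 1 ∧
      r = (‖x + u • y‖ + ‖x - u • y‖) / 2 - 1} := by
  refine ⟨|u|, ?_⟩
  rintro r ⟨x, y, hx, hy, rfl⟩
  have hadd := norm_add_le x (u • y)
  have hsub := norm_sub_le x (u • y)
  rw [norm_smul, hy, mul_one, Real.norm_eq_abs, hx] at hadd hsub
  linarith

lemma le_modulusOfSmoothness_s13 {x y : X} (hx : ‖x‖ = 1) (hy : ‖y‖ = 1) (u : ℝ) :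
    (‖x + u • y‖ + ‖x - u • y‖) / 2 - 1 ≤ modulusOfSmoothness X u :=
  le_csSup (bddAbove_modulusOfSmoothness_set u) ⟨x, y, hx, hy, rfl⟩

lemma modulusOfSmoothness_nonneg (u : ℝ) : 0 ≤ modulusOfSmoothness X u := by
  refine Real.sSup_nonneg ?_
  rintro r ⟨x, y, hx, -, rfl⟩
  have h : ‖(x + u • y) + (x - u • y)‖ ≤ ‖x + u • y‖ + ‖x - u • y‖ := norm_add_le _ _
  rw [add_add_sub_cancel, ← two_smul ℝ, norm_smul, hx, Real.norm_two, mul_one] at h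
  linarith

lemma norm_add_smul_le_of_le (x z : X) {s t : ℝ} (hs : 0 ≤ s) (hst : s ≤ t) (ht : 0 < t) :
    ‖x + s • z‖ ≤ (1 - s / t) * ‖x‖ + s / t * ‖x + t • z‖ := by
  have hw₀ : 0 ≤ s / t := div_nonneg hs ht.le
  have hw₁ : 0 ≤ 1 - s / t := sub_nonneg.mpr ((div_le_one ht).mpr hst)
  calc ‖x + s • z‖ = ‖(1 - s / t) • x + (s / t) • (x + t • z)‖ := by
        rw [smul_add, smul_smul, div_mul_cancel₀ _ ht.ne', sub_smul, one_smul]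
        abel_nf
    _ ≤ ‖(1 - s / t) • x‖ + ‖(s / t) • (x + t • z)‖ := norm_add_le _ _
    _ = (1 - s / t) * ‖x‖ + s / t * ‖x + t • z‖ := by
        rw [norm_smul, norm_smul, Real.norm_of_nonneg hw₀, Real.norm_of_nonneg hw₁]

lemma modulusOfSmoothness_le_div_mul {s t : ℝ} (hs : 0 ≤ s) (hst : s ≤ t) (ht : 0 < t) :
    modulusOfSmoothness X s ≤ s / t * modulusOfSmoothness X t := by
  refine Real.sSup_le ?_ (mul_nonneg (div_nonneg hs ht.le) (modulusOfSmoothness_nonneg t))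
  rintro r ⟨x, y, hx, hy, rfl⟩
  have hadd := norm_add_smul_le_of_le x y hs hst ht
  have hsub := norm_add_smul_le_of_le x (-y) hs hst ht
  simp only [smul_neg, ← sub_eq_add_neg, hx, mul_one] at hadd hsub
  have hρt := mul_le_mul_of_nonneg_left (le_modulusOfSmoothness_s13 hx hy t) (div_nonneg hs ht.le)
  linarith

lemma norm_add_add_norm_sub_le_of_norm_eq_one {x : X} (hx : ‖x‖ = 1) (y : X) :
    ‖x + y‖ + ‖x - y‖ ≤ 2 * (1 + modulusOfSmoothness X ‖y‖) := by
  rcases eq_or_ne y 0 with rfl | hy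
  · simp only [add_zero, sub_zero, hx, norm_zero]
    linarith [modulusOfSmoothness_nonneg (X := X) 0]
  · have hny : ‖y‖ ≠ 0 := norm_ne_zero_iff.mpr hy
    have hunit : ‖‖y‖⁻¹ • y‖ = 1 := by rw [norm_smul, norm_inv, norm_norm, inv_mul_cancel₀ hny]
    have h := le_modulusOfSmoothness_s13 hx hunit ‖y‖
    rw [smul_inv_smul₀ hny] at h
    linarith

lemma norm_add_add_norm_sub_le {x : X} (hx : x ≠ 0) (y : X) :
    ‖x + y‖ + ‖x - y‖ ≤ 2 * ‖x‖ * (1 + modulusOfSmoothness X (‖y‖ / ‖x‖)) := by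
  have hnx : ‖x‖ ≠ 0 := norm_ne_zero_iff.mpr hx
  have hunit : ‖‖x‖⁻¹ • x‖ = 1 := by rw [norm_smul, norm_inv, norm_norm, inv_mul_cancel₀ hnx]
  have h := norm_add_add_norm_sub_le_of_norm_eq_one hunit (‖x‖⁻¹ • y)
  rw [← smul_add, ← smul_sub, norm_smul, norm_smul, norm_smul, norm_inv, norm_norm,
    ← mul_add, inv_mul_eq_div, inv_mul_eq_div, div_le_iff₀ (norm_pos_iff.mpr hx)] at h
  linarith

lemma norm_sub_le_sub_add_modulusOfSmoothness {x : X} (hx : x ≠ 0) {F : X →L[ℝ] ℝ}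
    (hF : ‖F‖ ≤ 1) (hFx : F x = ‖x‖) (y : X) :
    ‖x - y‖ ≤ ‖x‖ - F y + 2 * ‖x‖ * modulusOfSmoothness X (‖y‖ / ‖x‖) := by
  have hxy : ‖x‖ + F y ≤ ‖x + y‖ :=
    calc ‖x‖ + F y = F (x + y) := by rw [map_add, hFx]
      _ ≤ ‖F (x + y)‖ := Real.le_norm_self _
      _ ≤ ‖x + y‖ := by simpa using F.le_of_opNorm_le hF (x + y)
  linarith [norm_add_add_norm_sub_le hx y]

lemma norm_sub_smul_le_one_add_abs {g : X} (hg : ‖g‖ = 1) {f : X} (hf : ‖f‖ = 1) (α : ℝ) :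
    ‖f - α • g‖ ≤ 1 + |α| :=
  calc ‖f - α • g‖ ≤ ‖f‖ + ‖α • g‖ := norm_sub_le _ _
    _ = 1 + |α| := by rw [hf, norm_smul, hg, mul_one, Real.norm_eq_abs]

lemma norm_sub_smul_le_modulusOfSmoothness {g : X} (hg : ‖g‖ = 1) {F : X →L[ℝ] ℝ}
    (hF : ‖F‖ ≤ 1) (hFg : F g = 1) {f : X} (hf : ‖f‖ = 1) (hFf : F f ≠ 0) :
    ‖f - F f • g‖ ≤ 2 * |F f| * modulusOfSmoothness X (1 / |F f|) := by
  wlog hpos : 0 < F f generalizing f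
  · have hneg : 0 < F (-f) := by rw [map_neg]; exact neg_pos.mpr (hFf.lt_of_le (not_lt.mp hpos))
    have := this (by rwa [norm_neg]) hneg.ne' hneg
    rwa [map_neg, abs_neg, neg_smul, sub_neg_eq_add, neg_add_eq_sub, norm_sub_rev] at this
  have hnorm : ‖F f • g‖ = |F f| := by rw [norm_smul, hg, mul_one, Real.norm_eq_abs]
  have hx : F f • g ≠ 0 := norm_ne_zero_iff.mp (by rw [hnorm]; exact abs_ne_zero.mpr hFf)
  have key := norm_sub_le_sub_add_modulusOfSmoothness hx hF
    (by rw [map_smul, hFg, hnorm, smul_eq_mul, mul_one, abs_of_pos hpos]) f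
  rw [norm_sub_rev, hnorm, hf, abs_of_pos hpos] at key
  rw [abs_of_pos hpos]
  linarith

lemma norm_sub_smul_le_one_add_of_forall {g : X} (hg : ‖g‖ = 1) {F : X →L[ℝ] ℝ}
    (hF : ‖F‖ ≤ 1) (hFg : F g = 1) {f : X} (hf : ‖f‖ = 1) {m : ℝ} (hm : 0 ≤ m)
    (hρm : ∀ a, m < a → 2 * a * modulusOfSmoothness X (1 / a) ≤ 1 + m) :
    ‖f - F f • g‖ ≤ 1 + m := by
  have htri := norm_sub_smul_le_one_add_abs hg hf (F f)
  by_cases hsmall : |F f| ≤ m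
  · linarith
  · replace hsmall := not_le.mp hsmall
    have hFf : F f ≠ 0 := abs_pos.mp (hm.trans_lt hsmall)
    exact (norm_sub_smul_le_modulusOfSmoothness hg hF hFg hf hFf).trans (hρm _ hsmall)

lemma mul_modulusOfSmoothness_one_div_le {m a : ℝ} (hm : 0 < m) (hma : m ≤ a) :
    a * modulusOfSmoothness X (1 / a) ≤ m * modulusOfSmoothness X (1 / m) := by
  have ha := hm.trans_le hma
  calc a * modulusOfSmoothness X (1 / a)
      ≤ a * ((1 / a) / (1 / m) * modulusOfSmoothness X (1 / m)) := by
        gcongr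
        exact modulusOfSmoothness_le_div_mul (by positivity) (one_div_le_one_div_of_le hm hma)
          (by positivity)
    _ = m * modulusOfSmoothness X (1 / m) := by field_simp

lemma mul_modulusOfSmoothness_one_div_le_rpow {c q : ℝ} (hc : 0 ≤ c) (hq : 1 ≤ q)
    (hρ : ∀ u : ℝ, 0 ≤ u → modulusOfSmoothness X u ≤ c * u ^ q) {m a : ℝ} (hm : 0 < m)
    (hma : m ≤ a) : a * modulusOfSmoothness X (1 / a) ≤ c * m ^ (1 - q) := by
  have ha := hm.trans_le hma
  calc a * modulusOfSmoothness X (1 / a) ≤ a * (c * (1 / a) ^ q) := by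
        gcongr; exact hρ _ (by positivity)
    _ = c * a ^ (1 - q) := by
        rw [one_div, Real.inv_rpow ha.le, Real.rpow_sub ha, Real.rpow_one]; ring
    _ ≤ c * m ^ (1 - q) :=
        mul_le_mul_of_nonneg_left (Real.rpow_le_rpow_of_nonpos hm hma (by linarith)) hc

end ModulusOfSmoothness

theorem one_dim_remainder_bound_power_type_general
    {X : Type*} [NormedAddCommGroup X] [NormedSpace ℝ X]
    (c q : ℝ) (hc : 0 < c) (hq : 1 < q)
    (hρ : ∀ u : ℝ, 0 ≤ u → modulusOfSmoothness X u ≤ c * u ^ q)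
    (g : X) (hg : ‖g‖ = 1) (F : X →L[ℝ] ℝ) (hF : ‖F‖ = 1) (hFg : F g = 1)
    (f : X) (hf : ‖f‖ = 1)
    (μ : ℝ) (hμ : μ ∈ Set.Ioc (0 : ℝ) 1)
    (hμeq : 1 + μ = 2 * μ * modulusOfSmoothness X (1 / μ))
    (μq : ℝ) (hμq : 0 < μq)
    (hμqeq : 1 + μq = 2 * c * μq ^ (1 - q)) :
    ‖f - F f • g‖ ≤ 1 + μ ∧ ‖f - F f • g‖ ≤ min (1 + μq) 2 := by
  obtain ⟨hμ0, -⟩ := hμ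
  have htri := norm_sub_smul_le_one_add_abs hg hf (F f)
  have habs : |F f| ≤ 1 := by simpa [hF, hf] using F.le_opNorm f
  refine ⟨norm_sub_smul_le_one_add_of_forall hg hF.le hFg hf hμ0.le fun a ha => ?_,
    le_min (norm_sub_smul_le_one_add_of_forall hg hF.le hFg hf hμq.le fun a ha => ?_)
      (by linarith)⟩
  · linarith [mul_modulusOfSmoothness_one_div_le (X := X) hμ0 ha.le]
  · linarith [mul_modulusOfSmoothness_one_div_le_rpow hc.le hq.le hρ hμq ha.le]

theorem one_dim_remainder_bound_power_type
    {X : Type*} [NormedAddCommGroup X] [NormedSpace ℝ X]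
    (c q : ℝ) (hc : 0 < c) (hq : 1 < q) (hq2 : q ≤ 2)
    (hρ : ∀ u : ℝ, 0 ≤ u → modulusOfSmoothness X u ≤ c * u ^ q)
    (g : X) (hg : ‖g‖ = 1) (F : X →L[ℝ] ℝ) (hF : ‖F‖ = 1) (hFg : F g = 1)
    (f : X) (hf : ‖f‖ = 1)
    (μ : ℝ) (hμ : μ ∈ Set.Ioc (0 : ℝ) 1)
    (hμeq : 1 + μ = 2 * μ * modulusOfSmoothness X (1 / μ))
    (μq : ℝ) (hμq : 0 < μq)
    (hμqeq : 1 + μq = 2 * c * μq ^ (1 - q)) :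
    ‖f - F f • g‖ ≤ 1 + μ ∧ ‖f - F f • g‖ ≤ min (1 + μq) 2 :=
  one_dim_remainder_bound_power_type_general c q hc hq hρ g hg F hF hFg f hf μ hμ hμeq μq hμq hμqeq
end

section
/- Let A = (a_{ij}) be an n×n real lower-triangular matrix with rows a₀,…,a_{n−1} ∈ ℝⁿ, let W_m be an m-dimensional subspace of ℝⁿ with 0 < m < n, and let P_m be the orthogonal projection onto W_m. Then ∏_{i=0}^{n−1} a_{ii}² ≤ ( (1/m) Σ_{i=0}^{n−1} ‖P_m a_i‖₂² )^m · ( (1/(n−m)) Σ_{i=0}^{n−1} ‖a_i − P_m a_i‖₂² )^{n−m}. -/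
/-!
Express the rows `aᵢ` of `A` in an orthonormal basis `u` of `ℝⁿ` made of an orthonormal basis
of `W` followed by one of `Wᗮ`. A change of orthonormal basis only changes the sign of the
determinant, so `(det A)²` is the squared determinant of the matrix `(⟪u_k, aᵢ⟫)`, which Hadamard's
inequality bounds by the product of its squared row norms `c_k = ∑ᵢ ⟪u_k, aᵢ⟫²`. AM-GM on the `m`
rows coming from `W` and on the `n - m` rows coming from `Wᗮ` bounds each partial product by a power
of the mean, and by Parseval the two sums of the `c_k` are `∑ᵢ ‖P_m aᵢ‖²` and `∑ᵢ ‖aᵢ - P_m aᵢ‖²`.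
-/

open Finset Module
open scoped RealInnerProductSpace

theorem Real.prod_le_arith_mean_pow {ι : Type*} (s : Finset ι) (z : ι → ℝ)
    (hz : ∀ i ∈ s, 0 ≤ z i) : ∏ i ∈ s, z i ≤ ((∑ i ∈ s, z i) / #s) ^ #s := by
  rcases s.eq_empty_or_nonempty with rfl | hs
  · simp
  have hamgm := Real.geom_mean_le_arith_mean s (fun _ => 1) z (fun _ _ => zero_le_one)
    (by simpa using hs) hz
  simp only [Real.rpow_one, sum_const, nsmul_eq_mul, mul_one, one_mul] at hamgm
  have hprod : 0 ≤ ∏ i ∈ s, z i := prod_nonneg hz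
  calc ∏ i ∈ s, z i = ((∏ i ∈ s, z i) ^ (#s : ℝ)⁻¹) ^ #s := by
        rw [← Real.rpow_natCast, ← Real.rpow_mul hprod,
          inv_mul_cancel₀ (by simpa using hs.ne_empty), Real.rpow_one]
    _ ≤ _ := by gcongr

theorem Orthonormal.sum_elim {𝕜 E ι κ : Type*} [RCLike 𝕜] [NormedAddCommGroup E]
    [InnerProductSpace 𝕜 E] {v : ι → E} {w : κ → E} (hv : Orthonormal 𝕜 v)
    (hw : Orthonormal 𝕜 w) (hvw : ∀ i k, inner 𝕜 (v i) (w k) = 0) :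
    Orthonormal 𝕜 (Sum.elim v w) := by
  refine ⟨fun i => ?_, fun i j hij => ?_⟩
  · rcases i with i | i
    exacts [hv.1 i, hw.1 i]
  · rcases i with i | i <;> rcases j with j | j
    · exact hv.2 (fun h => hij (congrArg _ h))
    · exact hvw i j
    · rw [inner_eq_zero_symm]; exact hvw j i
    · exact hw.2 (fun h => hij (congrArg _ h))

namespace OrthonormalBasis

variable {E ι : Type*} [NormedAddCommGroup E] [InnerProductSpace ℝ E] [Fintype ι] [DecidableEq ι]

theorem abs_det_le_prod_norm_of_fin {n : ℕ} (b : OrthonormalBasis (Fin n) ℝ E) (v : Fin n → E) :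
    |b.toBasis.det v| ≤ ∏ i, ‖v i‖ := by
  have : Fact (finrank ℝ E = n) := ⟨by simpa using finrank_eq_card_basis b.toBasis⟩
  rw [← b.toBasis.orientation.volumeForm_robust' b v]
  exact Orientation.abs_volumeForm_apply_le _ v

theorem abs_det_le_prod_norm (b : OrthonormalBasis ι ℝ E) (v : ι → E) :
    |b.toBasis.det v| ≤ ∏ i, ‖v i‖ := by
  let e := Fintype.equivFin ι
  have hv : b.toBasis.det v = (b.reindex e).toBasis.det (v ∘ e.symm) := by
    rw [reindex_toBasis, Basis.det_reindex, Function.comp_assoc, e.symm_comp_self,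
      Function.comp_id]
  rw [hv, ← e.symm.prod_comp]
  exact (b.reindex e).abs_det_le_prod_norm_of_fin _

theorem sq_det_eq_sq_det (b u : OrthonormalBasis ι ℝ E) (v : ι → E) :
    b.toBasis.det v ^ 2 = u.toBasis.det v ^ 2 := by
  rw [Basis.det_apply, ← b.toBasis.toMatrix_mul_toMatrix u.toBasis, Matrix.det_mul,
    ← Basis.det_apply, ← Basis.det_apply, mul_pow]
  rcases b.det_to_matrix_orthonormalBasis_real u with h | h <;> simp [h]

end OrthonormalBasis

namespace Matrix

variable {ι : Type*} [Fintype ι] [DecidableEq ι]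

theorem det_eq_basisFun_det_rows (M : Matrix ι ι ℝ) :
    M.det = (EuclideanSpace.basisFun ι ℝ).toBasis.det fun i => WithLp.toLp 2 (M i) := by
  rw [Basis.det_apply, ← det_transpose]
  rfl

/-- **Hadamard's inequality**. -/
theorem sq_det_le_prod_sum_sq (M : Matrix ι ι ℝ) : M.det ^ 2 ≤ ∏ i, ∑ j, M i j ^ 2 := by
  have hrow (i : ι) : ‖WithLp.toLp 2 (M i)‖ ^ 2 = ∑ j, M i j ^ 2 := by
    simp [EuclideanSpace.norm_sq_eq]
  rw [← sq_abs, det_eq_basisFun_det_rows]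
  calc _ ≤ (∏ i, ‖WithLp.toLp 2 (M i)‖) ^ 2 := by
        gcongr
        exact OrthonormalBasis.abs_det_le_prod_norm _ _
    _ = _ := by rw [← prod_pow]; simp_rw [hrow]

end Matrix

namespace OrthonormalBasis

section RCLike

variable {𝕜 E ι κ : Type*} [RCLike 𝕜] [NormedAddCommGroup E] [InnerProductSpace 𝕜 E]
  [Fintype ι] [Fintype κ] {K : Submodule 𝕜 E}

theorem span_range_coe (b : OrthonormalBasis ι 𝕜 K) :
    Submodule.span 𝕜 (Set.range fun i => (b i : E)) = K := by
  rw [show (fun i => (b i : E)) = K.subtype ∘ b from rfl, Set.range_comp, Submodule.span_image,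
    ← b.coe_toBasis, b.toBasis.span_eq, Submodule.map_top, Submodule.range_subtype]

variable [K.HasOrthogonalProjection]

noncomputable def sumOrthogonal (b : OrthonormalBasis ι 𝕜 K) (b' : OrthonormalBasis κ 𝕜 Kᗮ) :
    OrthonormalBasis (ι ⊕ κ) 𝕜 E :=
  OrthonormalBasis.mk
    ((b.orthonormal.comp_linearIsometry K.subtypeₗᵢ).sum_elim
      (b'.orthonormal.comp_linearIsometry Kᗮ.subtypeₗᵢ)
      fun i k => Submodule.inner_right_of_mem_orthogonal (b i).2 (b' k).2)
    (by
      rw [Set.Sum.elim_range, Submodule.span_union]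
      exact (Submodule.sup_orthogonal_of_hasOrthogonalProjection).ge.trans
        (sup_le_sup (b.span_range_coe).ge (b'.span_range_coe).ge))

@[simp]
theorem sumOrthogonal_inl (b : OrthonormalBasis ι 𝕜 K) (b' : OrthonormalBasis κ 𝕜 Kᗮ) (i : ι) :
    b.sumOrthogonal b' (Sum.inl i) = b i := by
  simp [sumOrthogonal]

@[simp]
theorem sumOrthogonal_inr (b : OrthonormalBasis ι 𝕜 K) (b' : OrthonormalBasis κ 𝕜 Kᗮ) (k : κ) :
    b.sumOrthogonal b' (Sum.inr k) = b' k := by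
  simp [sumOrthogonal]

end RCLike

section Real

variable {E ι κ : Type*} [NormedAddCommGroup E] [InnerProductSpace ℝ E] [Fintype ι] [Fintype κ]

theorem sq_det_le_prod_sum_sq_inner [DecidableEq ι] (b : OrthonormalBasis ι ℝ E)
    (u : OrthonormalBasis κ ℝ E) (v : ι → E) :
    b.toBasis.det v ^ 2 ≤ ∏ k, ∑ i, ⟪u k, v i⟫ ^ 2 := by
  let e : κ ≃ ι := Fintype.equivOfCardEq <| by
    rw [← finrank_eq_card_basis u.toBasis, finrank_eq_card_basis b.toBasis]
  let u' := u.reindex e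
  calc b.toBasis.det v ^ 2 = (u'.toBasis.toMatrix v).det ^ 2 := by
        rw [b.sq_det_eq_sq_det u', Basis.det_apply]
    _ ≤ ∏ j, ∑ i, u'.toBasis.toMatrix v j i ^ 2 := Matrix.sq_det_le_prod_sum_sq _
    _ = ∏ k, ∑ i, ⟪u k, v i⟫ ^ 2 := by
        rw [← e.prod_comp]
        simp [u', Basis.toMatrix_apply, OrthonormalBasis.repr_apply_apply]

theorem sum_sq_inner_eq_norm_sq_orthogonalProjectionOnto {K : Submodule ℝ E}
    [K.HasOrthogonalProjection] (b : OrthonormalBasis κ ℝ K) (x : E) :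
    ∑ k, ⟪(b k : E), x⟫ ^ 2 = ‖(K.orthogonalProjectionOnto x : E)‖ ^ 2 := by
  simp_rw [← Submodule.inner_orthogonalProjectionOnto_eq_of_mem_left]
  exact b.sum_sq_inner_right _

theorem prod_sum_sq_inner_le {K : Submodule ℝ E} [K.HasOrthogonalProjection]
    (b : OrthonormalBasis κ ℝ K) (v : ι → E) :
    ∏ k, ∑ i, ⟪(b k : E), v i⟫ ^ 2 ≤
      ((∑ i, ‖(K.orthogonalProjectionOnto (v i) : E)‖ ^ 2) / Fintype.card κ) ^ Fintype.card κ := by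
  simp_rw [← b.sum_sq_inner_eq_norm_sq_orthogonalProjectionOnto]
  rw [sum_comm]
  exact Real.prod_le_arith_mean_pow _ _ fun k _ => sum_nonneg fun i _ => sq_nonneg _

end Real

end OrthonormalBasis

theorem Submodule.sq_det_le_mul_mean_sq_norm_orthogonalProjectionOnto {E ι : Type*}
    [NormedAddCommGroup E] [InnerProductSpace ℝ E] [FiniteDimensional ℝ E] [Fintype ι]
    [DecidableEq ι] (K : Submodule ℝ E) [K.HasOrthogonalProjection]
    (b : OrthonormalBasis ι ℝ E) (v : ι → E) :
    b.toBasis.det v ^ 2 ≤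
      ((∑ i, ‖(K.orthogonalProjectionOnto (v i) : E)‖ ^ 2) / finrank ℝ K) ^ finrank ℝ K *
        ((∑ i, ‖v i - K.orthogonalProjectionOnto (v i)‖ ^ 2) / finrank ℝ Kᗮ) ^ finrank ℝ Kᗮ := by
  let bK := stdOrthonormalBasis ℝ K
  let bK' := stdOrthonormalBasis ℝ Kᗮ
  have hsplit := b.sq_det_le_prod_sum_sq_inner (bK.sumOrthogonal bK') v
  simp only [Fintype.prod_sum_type, OrthonormalBasis.sumOrthogonal_inl,
    OrthonormalBasis.sumOrthogonal_inr] at hsplit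
  refine hsplit.trans (mul_le_mul ?_ ?_ (prod_nonneg fun _ _ => by positivity) (by positivity))
  · simpa using bK.prod_sum_sq_inner_le v
  · simpa [Submodule.orthogonalProjectionOnto_orthogonal] using bK'.prod_sum_sq_inner_le v

theorem lower_triangular_projection_inequality_general
    (n m : ℕ)
    (A : Matrix (Fin n) (Fin n) ℝ)
    (hA : ∀ i j : Fin n, i < j → A i j = 0)
    (W : Submodule ℝ (EuclideanSpace ℝ (Fin n))) [CompleteSpace W]
    (hW : Module.finrank ℝ W = m) :
    let a : Fin n → EuclideanSpace ℝ (Fin n) :=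
      fun i => (WithLp.equiv 2 (Fin n → ℝ)).symm (A i)
    ∏ i : Fin n, (A i i) ^ 2 ≤
      ((1 / (m : ℝ)) * ∑ i : Fin n, ‖(Submodule.orthogonalProjectionOnto W (a i) : EuclideanSpace ℝ (Fin n))‖ ^ 2) ^ m *
        ((1 / ((n : ℝ) - m)) * ∑ i : Fin n,
          ‖a i - (Submodule.orthogonalProjectionOnto W (a i) : EuclideanSpace ℝ (Fin n))‖ ^ 2) ^ (n - m) := by
  intro a
  have hrank : m + finrank ℝ Wᗮ = n := by
    simpa [hW] using W.finrank_add_finrank_orthogonal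
  have hdet : ∏ i, A i i ^ 2 = (EuclideanSpace.basisFun (Fin n) ℝ).toBasis.det a ^ 2 := by
    rw [prod_pow, ← A.det_of_isLowerTriangular hA, A.det_eq_basisFun_det_rows]
    rfl
  have hbound := W.sq_det_le_mul_mean_sq_norm_orthogonalProjectionOnto
    (EuclideanSpace.basisFun (Fin n) ℝ) a
  rw [hW, show finrank ℝ Wᗮ = n - m by omega, Nat.cast_sub (by omega)] at hbound
  simpa only [hdet, one_div_mul_eq_div] using hbound

theorem lower_triangular_projection_inequality
    (n m : ℕ) (hm : 0 < m) (hmn : m < n)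
    (A : Matrix (Fin n) (Fin n) ℝ)
    (hA : ∀ i j : Fin n, i < j → A i j = 0)
    (W : Submodule ℝ (EuclideanSpace ℝ (Fin n))) [CompleteSpace W]
    (hW : Module.finrank ℝ W = m) :
    let a : Fin n → EuclideanSpace ℝ (Fin n) :=
      fun i => (WithLp.equiv 2 (Fin n → ℝ)).symm (A i)
    ∏ i : Fin n, (A i i) ^ 2 ≤
      ((1 / (m : ℝ)) * ∑ i : Fin n, ‖(Submodule.orthogonalProjectionOnto W (a i) : EuclideanSpace ℝ (Fin n))‖ ^ 2) ^ m *
        ((1 / ((n : ℝ) - m)) * ∑ i : Fin n,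
          ‖a i - (Submodule.orthogonalProjectionOnto W (a i) : EuclideanSpace ℝ (Fin n))‖ ^ 2) ^ (n - m) :=
  lower_triangular_projection_inequality_general n m A hA W hW
end
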